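/- Consider the Hamiltonian system on T*G where G is the Lie group of the algebra [e₁,e₄] = e₄, [e₂,e₄] = e₄, realized in coordinates (g¹,g²,g³,g⁴) with the magnetic equations ṗᵢ = −∂H/∂gⁱ − e F_{ij} ∂H/∂p_j, for the field form F = α dg¹∧dg² + β dg¹∧dg³ + γ dg²∧dg³ + f₄ exp(g¹+g²)(dg¹+dg²)∧dg⁴. Then the functions ξ₁ = p₁ − g⁴p₄ + e(αg² + βg³), ξ₂ = p₂ − g⁴p₄ − e(αg¹ − γg³), ξ₃ = p₃ − e(βg¹ + γg²), ξ₄ = p₄ Poisson-commute with the Hamiltonian H = (1/2) g^{ij}(g) p_i p_j for any right-invariant metric, with respect to the deformed bracket {p_i, p_j} = e F_{ij}(g), when f₄ = 0. -/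

import Mathlib

open scoped BigOperators

/-- The inverse right-invariant metric g^{ij}(g) = D⁻¹ G⁻¹ D⁻¹ coming from the
right-invariant coframe σ¹=−dg¹, σ²=−dg², σ³=−dg³, σ⁴=−exp(g¹+g²)dg⁴ and a
constant matrix G, and the corresponding Hamiltonian H = ½ g^{ij} p_i p_j.
A point of phase space is x = (q, p) with q = (g¹,…,g⁴). -/
noncomputable def H14 (G : Matrix (Fin 4) (Fin 4) ℝ)
    (x : (Fin 4 → ℝ) × (Fin 4 → ℝ)) : ℝ :=
  (1 / 2) * ∑ i : Fin 4, ∑ j : Fin 4,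
    ((Matrix.diagonal fun i : Fin 4 =>
        if i = 3 then Real.exp (-(x.1 0 + x.1 1)) else 1) * G⁻¹ *
     (Matrix.diagonal fun i : Fin 4 =>
        if i = 3 then Real.exp (-(x.1 0 + x.1 1)) else 1)) i j
      * x.2 i * x.2 j

/-- Partial derivative in the configuration direction gⁱ. -/
noncomputable def dq14 (u : (Fin 4 → ℝ) × (Fin 4 → ℝ) → ℝ)
    (x : (Fin 4 → ℝ) × (Fin 4 → ℝ)) (i : Fin 4) : ℝ :=
  fderiv ℝ u x (Pi.single i 1, 0)

/-- Partial derivative in the momentum direction p_i. -/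
noncomputable def dp14 (u : (Fin 4 → ℝ) × (Fin 4 → ℝ) → ℝ)
    (x : (Fin 4 → ℝ) × (Fin 4 → ℝ)) (i : Fin 4) : ℝ :=
  fderiv ℝ u x (0, Pi.single i 1)

/-- The Poisson bracket deformed by the magnetic 2-form F:
{gⁱ,gʲ} = 0, {p_i,gʲ} = δᵢʲ, {p_i,p_j} = e F_{ij}. -/
noncomputable def PB14 (e : ℝ) (Fm : Matrix (Fin 4) (Fin 4) ℝ)
    (u v : (Fin 4 → ℝ) × (Fin 4 → ℝ) → ℝ)
    (x : (Fin 4 → ℝ) × (Fin 4 → ℝ)) : ℝ :=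
  (∑ i : Fin 4, (dp14 u x i * dq14 v x i - dq14 u x i * dp14 v x i))
    + e * ∑ i : Fin 4, ∑ j : Fin 4, Fm i j * dp14 u x i * dp14 v x j

abbrev P14 := (Fin 4 → ℝ) × (Fin 4 → ℝ)
noncomputable def kk14 (i j : Fin 4) : ℝ :=
  (if i = 3 then (-1 : ℝ) else 0) + (if j = 3 then (-1 : ℝ) else 0)

lemma H14_eq (G : Matrix (Fin 4) (Fin 4) ℝ) :
    H14 G = fun x : P14 => (1 / 2 : ℝ) * ∑ i : Fin 4, ∑ j : Fin 4,
      G⁻¹ i j * Real.exp (kk14 i j * (x.1 0 + x.1 1)) * x.2 i * x.2 j := by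
  funext x
  unfold H14
  congr 1
  refine Finset.sum_congr rfl fun i _ => Finset.sum_congr rfl fun j _ => ?_
  have key : ((Matrix.diagonal fun i : Fin 4 =>
        if i = 3 then Real.exp (-(x.1 0 + x.1 1)) else 1) * G⁻¹ *
     (Matrix.diagonal fun i : Fin 4 =>
        if i = 3 then Real.exp (-(x.1 0 + x.1 1)) else 1)) i j
      = G⁻¹ i j * Real.exp (kk14 i j * (x.1 0 + x.1 1)) := by
    rw [Matrix.mul_diagonal, Matrix.diagonal_mul]
    unfold kk14
    rcases eq_or_ne i 3 with hi | hi <;> rcases eq_or_ne j 3 with hj | hj <;>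
      simp only [hi, hj, if_pos rfl, if_neg, if_true, if_false]
    · rw [show ((-1 : ℝ) + -1) * (x.1 0 + x.1 1)
          = -(x.1 0 + x.1 1) + -(x.1 0 + x.1 1) by ring, Real.exp_add]
      ring
    · rw [show ((-1 : ℝ) + 0) * (x.1 0 + x.1 1) = -(x.1 0 + x.1 1) by ring]
      ring
    · rw [show ((0 : ℝ) + -1) * (x.1 0 + x.1 1) = -(x.1 0 + x.1 1) by ring]
      ring
    · rw [show ((0 : ℝ) + 0) * (x.1 0 + x.1 1) = 0 by ring, Real.exp_zero]
      ring
  rw [key]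

lemma hterm14 (C k : ℝ) (i j : Fin 4) (x : P14) :
    ∃ L : P14 →L[ℝ] ℝ,
      HasFDerivAt (fun y : P14 => C * Real.exp (k * (y.1 0 + y.1 1)) * y.2 i * y.2 j) L x ∧
      ∀ v : P14, L v = C * Real.exp (k * (x.1 0 + x.1 1)) *
        (k * (v.1 0 + v.1 1) * (x.2 i * x.2 j) + v.2 i * x.2 j + x.2 i * v.2 j) := by
  have h0 : HasFDerivAt (fun y : P14 => y.1 0)
      ((ContinuousLinearMap.proj 0).comp (ContinuousLinearMap.fst ℝ (Fin 4 → ℝ) (Fin 4 → ℝ))) x :=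
    ((ContinuousLinearMap.proj 0).comp (ContinuousLinearMap.fst ℝ (Fin 4 → ℝ) (Fin 4 → ℝ))).hasFDerivAt
  have h1 : HasFDerivAt (fun y : P14 => y.1 1)
      ((ContinuousLinearMap.proj 1).comp (ContinuousLinearMap.fst ℝ (Fin 4 → ℝ) (Fin 4 → ℝ))) x :=
    ((ContinuousLinearMap.proj 1).comp (ContinuousLinearMap.fst ℝ (Fin 4 → ℝ) (Fin 4 → ℝ))).hasFDerivAt
  have hpi : HasFDerivAt (fun y : P14 => y.2 i)
      ((ContinuousLinearMap.proj i).comp (ContinuousLinearMap.snd ℝ (Fin 4 → ℝ) (Fin 4 → ℝ))) x :=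
    ((ContinuousLinearMap.proj i).comp (ContinuousLinearMap.snd ℝ (Fin 4 → ℝ) (Fin 4 → ℝ))).hasFDerivAt
  have hpj : HasFDerivAt (fun y : P14 => y.2 j)
      ((ContinuousLinearMap.proj j).comp (ContinuousLinearMap.snd ℝ (Fin 4 → ℝ) (Fin 4 → ℝ))) x :=
    ((ContinuousLinearMap.proj j).comp (ContinuousLinearMap.snd ℝ (Fin 4 → ℝ) (Fin 4 → ℝ))).hasFDerivAt
  have hs := h0.add h1
  have hk := hs.const_mul k
  have he := hk.exp
  have hCe := he.const_mul C
  have hm1 := hCe.mul hpi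
  have hm2 := hm1.mul hpj
  refine ⟨_, hm2, fun v => ?_⟩
  simp [ContinuousLinearMap.add_apply, ContinuousLinearMap.smul_apply,
    ContinuousLinearMap.comp_apply, ContinuousLinearMap.proj_apply,
    ContinuousLinearMap.coe_fst', ContinuousLinearMap.coe_snd', smul_eq_mul]
  ring


lemma fderivH14 (G : Matrix (Fin 4) (Fin 4) ℝ) (x : P14) (v : P14) :
    fderiv ℝ (H14 G) x v = (1 / 2 : ℝ) * ∑ i : Fin 4, ∑ j : Fin 4,
      G⁻¹ i j * Real.exp (kk14 i j * (x.1 0 + x.1 1)) *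
        (kk14 i j * (v.1 0 + v.1 1) * (x.2 i * x.2 j) + v.2 i * x.2 j + x.2 i * v.2 j) := by
  choose L hL hLv using fun i j : Fin 4 => hterm14 (G⁻¹ i j) (kk14 i j) i j x
  have hsum : HasFDerivAt (fun y : P14 => ∑ i : Fin 4, ∑ j : Fin 4,
      G⁻¹ i j * Real.exp (kk14 i j * (y.1 0 + y.1 1)) * y.2 i * y.2 j)
      (∑ i : Fin 4, ∑ j : Fin 4, L i j) x :=
    HasFDerivAt.fun_sum fun i _ => HasFDerivAt.fun_sum fun j _ => hL i j
  have hH : HasFDerivAt (H14 G) ((1 / 2 : ℝ) • ∑ i : Fin 4, ∑ j : Fin 4, L i j) x := by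
    rw [H14_eq]
    exact hsum.const_mul (1 / 2)
  rw [hH.fderiv]
  simp only [ContinuousLinearMap.smul_apply, ContinuousLinearMap.sum_apply, hLv, smul_eq_mul]

lemma fderiv_xi14 (a : Fin 4) (c3 c0 c1 c2 : ℝ) (x v : P14) :
    fderiv ℝ (fun y : P14 =>
        y.2 a - c3 * (y.1 3 * y.2 3) + (c0 * y.1 0 + c1 * y.1 1 + c2 * y.1 2)) x v
      = v.2 a - c3 * (v.1 3 * x.2 3 + x.1 3 * v.2 3)
        + (c0 * v.1 0 + c1 * v.1 1 + c2 * v.1 2) := by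
  have hq : ∀ b : Fin 4, HasFDerivAt (fun y : P14 => y.1 b)
      ((ContinuousLinearMap.proj b).comp (ContinuousLinearMap.fst ℝ (Fin 4 → ℝ) (Fin 4 → ℝ))) x :=
    fun b => ((ContinuousLinearMap.proj b).comp
      (ContinuousLinearMap.fst ℝ (Fin 4 → ℝ) (Fin 4 → ℝ))).hasFDerivAt
  have hp : ∀ b : Fin 4, HasFDerivAt (fun y : P14 => y.2 b)
      ((ContinuousLinearMap.proj b).comp (ContinuousLinearMap.snd ℝ (Fin 4 → ℝ) (Fin 4 → ℝ))) x :=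
    fun b => ((ContinuousLinearMap.proj b).comp
      (ContinuousLinearMap.snd ℝ (Fin 4 → ℝ) (Fin 4 → ℝ))).hasFDerivAt
  have h := (((hp a).sub (((hq 3).mul (hp 3)).const_mul c3)).add
    ((((hq 0).const_mul c0).add ((hq 1).const_mul c1)).add ((hq 2).const_mul c2)))
  rw [HasFDerivAt.fderiv (f := fun y : P14 => y.2 a - c3 * (y.1 3 * y.2 3) + (c0 * y.1 0 + c1 * y.1 1 + c2 * y.1 2)) h]
  simp [ContinuousLinearMap.add_apply, ContinuousLinearMap.smul_apply,
    ContinuousLinearMap.comp_apply, ContinuousLinearMap.proj_apply,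
    ContinuousLinearMap.coe_fst', ContinuousLinearMap.coe_snd', smul_eq_mul]
  ring

/-- For the solvable group of the algebra [e₁,e₄]=e₄, [e₂,e₄]=e₄ with any
right-invariant metric, and the magnetic form
F = α dg¹∧dg² + β dg¹∧dg³ + γ dg²∧dg³ (the case f₄ = 0), the functions
ξ₁ = p₁ − g⁴p₄ + e(αg²+βg³), ξ₂ = p₂ − g⁴p₄ − e(αg¹−γg³),
ξ₃ = p₃ − e(βg¹+γg²), ξ₄ = p₄ Poisson-commute with H. -/
theorem stmt_14 (e α β γ : ℝ) (G : Matrix (Fin 4) (Fin 4) ℝ)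
    (hsymm : G.transpose = G) (hinv : IsUnit G.det)
    (Fm : Matrix (Fin 4) (Fin 4) ℝ)
    (hFm : Fm = !![0, α, β, 0; -α, 0, γ, 0; -β, -γ, 0, 0; 0, 0, 0, 0]) :
    ∀ x : (Fin 4 → ℝ) × (Fin 4 → ℝ),
      PB14 e Fm
        (fun y => y.2 0 - y.1 3 * y.2 3 + e * (α * y.1 1 + β * y.1 2))
        (H14 G) x = 0 ∧
      PB14 e Fm
        (fun y => y.2 1 - y.1 3 * y.2 3 - e * (α * y.1 0 - γ * y.1 2))
        (H14 G) x = 0 ∧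
      PB14 e Fm
        (fun y => y.2 2 - e * (β * y.1 0 + γ * y.1 1))
        (H14 G) x = 0 ∧
      PB14 e Fm (fun y => y.2 3) (H14 G) x = 0 := by
  intro x
  have e1 : (fun y : P14 => y.2 0 - y.1 3 * y.2 3 + e * (α * y.1 1 + β * y.1 2))
      = (fun y : P14 => y.2 0 - 1 * (y.1 3 * y.2 3)
          + (0 * y.1 0 + (e * α) * y.1 1 + (e * β) * y.1 2)) := by funext y; ring
  have e2 : (fun y : P14 => y.2 1 - y.1 3 * y.2 3 - e * (α * y.1 0 - γ * y.1 2))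
      = (fun y : P14 => y.2 1 - 1 * (y.1 3 * y.2 3)
          + ((-(e * α)) * y.1 0 + 0 * y.1 1 + (e * γ) * y.1 2)) := by funext y; ring
  have e3 : (fun y : P14 => y.2 2 - e * (β * y.1 0 + γ * y.1 1))
      = (fun y : P14 => y.2 2 - 0 * (y.1 3 * y.2 3)
          + ((-(e * β)) * y.1 0 + (-(e * γ)) * y.1 1 + 0 * y.1 2)) := by funext y; ring
  have e4 : (fun y : P14 => y.2 3)
      = (fun y : P14 => y.2 3 - 0 * (y.1 3 * y.2 3)
          + (0 * y.1 0 + 0 * y.1 1 + 0 * y.1 2)) := by funext y; ring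
  refine ⟨?_, ?_, ?_, ?_⟩
  · simp only [PB14, dq14, dp14, hFm, e1, fderiv_xi14, fderivH14]
    simp [Fin.sum_univ_four, kk14, Pi.single_apply,
      Matrix.cons_val_zero, Matrix.cons_val_one, Matrix.head_cons, Matrix.vecHead,
      Matrix.vecTail, Function.comp]
    ring
  · simp only [PB14, dq14, dp14, hFm, e2, fderiv_xi14, fderivH14]
    simp [Fin.sum_univ_four, kk14, Pi.single_apply,
      Matrix.cons_val_zero, Matrix.cons_val_one, Matrix.head_cons, Matrix.vecHead,
      Matrix.vecTail, Function.comp]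
    ring
  · simp only [PB14, dq14, dp14, hFm, e3, fderiv_xi14, fderivH14]
    simp [Fin.sum_univ_four, kk14, Pi.single_apply,
      Matrix.cons_val_zero, Matrix.cons_val_one, Matrix.head_cons, Matrix.vecHead,
      Matrix.vecTail, Function.comp]
    ring
  · simp only [PB14, dq14, dp14, hFm, e4, fderiv_xi14, fderivH14]
    simp [Fin.sum_univ_four, kk14, Pi.single_apply,
      Matrix.cons_val_zero, Matrix.cons_val_one, Matrix.head_cons, Matrix.vecHead,
      Matrix.vecTail, Function.comp]
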